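/- Parallel βs-reduction is strongly confluent (satisfies the diamond property): if f ⇒ g and f ⇒ h for the parallel βs-reduction relation ⇒ on suspension expressions, then there exists k with g ⇒ k and h ⇒ k. -/
import Mathlib


mutual
inductive STerm : Type
  | mv    : ℕ → STerm   -- graftable meta variable
  | const : ℕ → STerm
  | var   : ℕ → STerm
  | app   : STerm → STerm → STerm
  | lam   : STerm → STerm
  | susp  : STerm → ℕ → ℕ → SEnv → STerm
inductive SEnv : Type
  | nil   : SEnv
  | cons  : STerm → ℕ → SEnv → SEnv
  | merge : SEnv → ℕ → ℕ → SEnv → SEnv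
end

def SEnv.len : SEnv → ℕ
  | .nil => 0
  | .cons _ _ e => 1 + e.len
  | .merge e1 nl1 ol2 _ => e1.len + (ol2 - nl1)

def SEnv.lev : SEnv → ℕ
  | .nil => 0
  | .cons _ n _ => n
  | .merge _ nl1 ol2 e2 => e2.lev + (nl1 - ol2)

mutual
def STerm.wf : STerm → Prop
  | .mv _ => True
  | .const _ => True
  | .var _ => True
  | .app t1 t2 => t1.wf ∧ t2.wf
  | .lam t => t.wf
  | .susp t ol nl e => t.wf ∧ e.wf ∧ e.len = ol ∧ e.lev ≤ nl
def SEnv.wf : SEnv → Prop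
  | .nil => True
  | .cons t n e => t.wf ∧ e.wf ∧ e.lev ≤ n
  | .merge e1 nl1 ol2 e2 => e1.wf ∧ e2.wf ∧ e2.len = ol2 ∧ e1.lev ≤ nl1
end

mutual
/-- Parallel βs-reduction on terms. -/
inductive ParT : STerm → STerm → Prop
  | refl : ∀ t, ParT t t
  | app : ∀ t1 t1' t2 t2', ParT t1 t1' → ParT t2 t2' → ParT (.app t1 t2) (.app t1' t2')
  | lamC : ∀ t t', ParT t t' → ParT (.lam t) (.lam t')
  | susp : ∀ (t t' : STerm) (ol nl : ℕ) (e e' : SEnv),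
      ParT t t' → ParE e e' → ParT (.susp t ol nl e) (.susp t' ol nl e')
  | beta : ∀ t1 t1' t2 t2', ParT t1 t1' → ParT t2 t2' →
      ParT (.app (.lam t1) t2) (.susp t1' 1 0 (.cons t2' 0 .nil))
/-- Parallel βs-reduction on environments. -/
inductive ParE : SEnv → SEnv → Prop
  | refl : ∀ e, ParE e e
  | cons : ∀ (t t' : STerm) (l : ℕ) (e e' : SEnv),
      ParT t t' → ParE e e' → ParE (.cons t l e) (.cons t' l e')
  | merge : ∀ (e1 e1' : SEnv) (nl1 ol2 : ℕ) (e2 e2' : SEnv),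
      ParE e1 e1' → ParE e2 e2' → ParE (.merge e1 nl1 ol2 e2) (.merge e1' nl1 ol2 e2')
end


mutual
def cdT : STerm → STerm
  | .app (.lam t1) t2 => .susp (cdT t1) 1 0 (.cons (cdT t2) 0 .nil)
  | .app t1 t2 => .app (cdT t1) (cdT t2)
  | .lam t => .lam (cdT t)
  | .susp t ol nl e => .susp (cdT t) ol nl (cdE e)
  | t => t
def cdE : SEnv → SEnv
  | .nil => .nil
  | .cons t l e => .cons (cdT t) l (cdE e)
  | .merge e1 n o e2 => .merge (cdE e1) n o (cdE e2)
end

theorem parT_lam_inv {t g} (h : ParT (.lam t) g) : ∃ t', g = .lam t' ∧ ParT t t' := by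
  cases h with
  | refl => exact ⟨t, rfl, .refl t⟩
  | lamC _ t' h => exact ⟨t', rfl, h⟩

mutual
theorem triT : ∀ t g, ParT t g → ParT g (cdT t)
  | .mv _, _, h => by cases h; exact .refl _
  | .const _, _, h => by cases h; exact .refl _
  | .var _, _, h => by cases h; exact .refl _
  | .lam t, _, h => by
      simp only [cdT]
      cases h with
      | refl => exact .lamC _ _ (triT t t (.refl t))
      | lamC _ t' h => exact .lamC _ _ (triT t t' h)
  | .susp t ol nl e, _, h => by
      simp only [cdT]
      cases h with
      | refl => exact .susp _ _ _ _ _ _ (triT t t (.refl t)) (triE e e (.refl e))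
      | susp _ t' _ _ _ e' ht he => exact .susp _ _ _ _ _ _ (triT t t' ht) (triE e e' he)
  | .app (.lam t1) t2, _, h => by
      simp only [cdT]
      cases h with
      | refl => exact .beta _ _ _ _ (triT t1 t1 (.refl t1)) (triT t2 t2 (.refl t2))
      | app _ t1' _ t2' h1 h2 =>
          obtain ⟨s, rfl, hs⟩ := parT_lam_inv h1
          exact .beta _ _ _ _ (triT t1 s hs) (triT t2 t2' h2)
      | beta _ t1' _ t2' h1 h2 =>
          exact .susp _ _ _ _ _ _ (triT t1 t1' h1)
            (.cons _ _ _ _ _ (triT t2 t2' h2) (.refl _))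
  | .app (.mv n) t2, _, h => by
      simp only [cdT]
      cases h with
      | refl => exact .app _ _ _ _ (triT _ _ (.refl _)) (triT _ _ (.refl _))
      | app _ t1' _ t2' h1 h2 => exact .app _ _ _ _ (triT _ _ h1) (triT _ _ h2)
  | .app (.const n) t2, _, h => by
      simp only [cdT]
      cases h with
      | refl => exact .app _ _ _ _ (triT _ _ (.refl _)) (triT _ _ (.refl _))
      | app _ t1' _ t2' h1 h2 => exact .app _ _ _ _ (triT _ _ h1) (triT _ _ h2)
  | .app (.var n) t2, _, h => by
      simp only [cdT]
      cases h with
      | refl => exact .app _ _ _ _ (triT _ _ (.refl _)) (triT _ _ (.refl _))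
      | app _ t1' _ t2' h1 h2 => exact .app _ _ _ _ (triT _ _ h1) (triT _ _ h2)
  | .app (.app a b) t2, _, h => by
      simp only [cdT]
      cases h with
      | refl => exact .app _ _ _ _ (triT _ _ (.refl _)) (triT _ _ (.refl _))
      | app _ t1' _ t2' h1 h2 => exact .app _ _ _ _ (triT _ _ h1) (triT _ _ h2)
  | .app (.susp a ol nl e) t2, _, h => by
      simp only [cdT]
      cases h with
      | refl => exact .app _ _ _ _ (triT _ _ (.refl _)) (triT _ _ (.refl _))
      | app _ t1' _ t2' h1 h2 => exact .app _ _ _ _ (triT _ _ h1) (triT _ _ h2)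
theorem triE : ∀ e g, ParE e g → ParE g (cdE e)
  | .nil, _, h => by cases h; exact .refl _
  | .cons t l e, _, h => by
      simp only [cdE]
      cases h with
      | refl => exact .cons _ _ _ _ _ (triT t t (.refl t)) (triE e e (.refl e))
      | cons _ t' _ _ e' ht he => exact .cons _ _ _ _ _ (triT t t' ht) (triE e e' he)
  | .merge e1 n o e2, _, h => by
      simp only [cdE]
      cases h with
      | refl => exact .merge _ _ _ _ _ _ (triE e1 e1 (.refl e1)) (triE e2 e2 (.refl e2))
      | merge _ e1' _ _ _ e2' h1 h2 => exact .merge _ _ _ _ _ _ (triE e1 e1' h1) (triE e2 e2' h2)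
end

/-- parallel βs-reduction is strongly confluent (diamond property). -/
theorem stmt8 :
    (∀ f g h : STerm, ParT f g → ParT f h → ∃ k, ParT g k ∧ ParT h k) ∧
    (∀ f g h : SEnv, ParE f g → ParE f h → ∃ k, ParE g k ∧ ParE h k) := by
  exact ⟨fun f g h hg hh => ⟨cdT f, triT f g hg, triT f h hh⟩,
    fun f g h hg hh => ⟨cdE f, triE f g hg, triE f h hh⟩⟩
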